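/- Let 𝒮 and 𝒯 be two nonempty families of subsets of ω, each closed under finite additions of elements. Suppose 𝒮 ⊆ 𝒯 and that for every T ∈ 𝒯 there is S ∈ 𝒮 with S ⊆ T. Then for the associated flower graphs, G_𝒮 ≥₃ G_𝒯. -/

import Mathlib

open FirstOrder Language

namespace BFPaper

noncomputable section

/-! ## Countability of formulas in a countable relational language -/

instance formulaCountable (L : FirstOrder.Language.{0,0}) [L.IsRelational]
    [∀ n, Countable (L.Relations n)] (α : Type) [Countable α] :
    Countable (L.Formula α) := by
  have h1 : Countable (Σ n, L.BoundedFormula α n) :=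
    Function.Injective.countable BoundedFormula.listEncode_sigma_injective
  exact Function.Injective.countable
    (f := fun φ : L.Formula α => (⟨0, φ⟩ : Σ n, L.BoundedFormula α n))
    (fun a b h => by simpa using h)

/-- A fixed enumeration of the quantifier-free first-order formulas in the
variables `x_0, …, x_{n-1}`. -/
noncomputable def qfEnum (L : FirstOrder.Language.{0,0}) [L.IsRelational]
    [∀ n, Countable (L.Relations n)] (n : ℕ) : ℕ → L.Formula (Fin n) := fun k =>
  haveI : Nonempty {φ : L.Formula (Fin n) // φ.IsQF} :=
    ⟨⟨⊥, BoundedFormula.isQF_bot⟩⟩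
  (Classical.choose (exists_surjective_nat {φ : L.Formula (Fin n) // φ.IsQF}) k).1

/-! ## The standard asymmetric back-and-forth relations -/

/-- `bfLeq L α M N a b` is the standard asymmetric back-and-forth relation
`(M, ā) ≤_α (N, b̄)`. -/
noncomputable def bfLeq (L : FirstOrder.Language.{0,0}) [L.IsRelational]
    [∀ n, Countable (L.Relations n)] (α : Ordinal.{0}) (M N : Type)
    [L.Structure M] [L.Structure N] {n : ℕ} (a : Fin n → M) (b : Fin n → N) : Prop :=
  if α = 0 then
    ∀ k < n, ((qfEnum L n k).Realize a ↔ (qfEnum L n k).Realize b)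
  else
    ∀ β, ∀ _ : β < α, ∀ (m : ℕ) (d : Fin m → N), ∃ c : Fin m → M,
      bfLeq L β N M (Fin.append b d) (Fin.append a c)
termination_by α
decreasing_by assumption

/-- `M ≤_α N` for whole structures (empty tuples). -/
noncomputable def structLeq (L : FirstOrder.Language.{0,0}) [L.IsRelational]
    [∀ n, Countable (L.Relations n)] (α : Ordinal.{0}) (M N : Type)
    [L.Structure M] [L.Structure N] : Prop :=
  bfLeq L α M N Fin.elim0 Fin.elim0

/-! ## The space of countable `L`-structures -/

/-- The Polish space `Mod(L)` of `L`-structures with universe `ℕ` (for a relational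
language), presented as a product of discrete spaces. -/
abbrev ModSpace (L : FirstOrder.Language.{0,0}) : Type :=
  ∀ (n : ℕ), L.Relations n → (Fin n → ℕ) → Bool

/-- The underlying set (`ℕ`) of the structure coded by a point of `Mod(L)`. -/
def ModCarrier {L : FirstOrder.Language.{0,0}} (_x : ModSpace L) : Type := ℕ

instance {L : FirstOrder.Language.{0,0}} (x : ModSpace L) : Countable (ModCarrier x) :=
  inferInstanceAs (Countable ℕ)

noncomputable instance modCarrierStructure {L : FirstOrder.Language.{0,0}} [L.IsRelational]
    (x : ModSpace L) : L.Structure (ModCarrier x) where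
  funMap := fun {_} f => isEmptyElim f
  RelMap := fun {n} R v => x n R v = true

/-! ## The boldface Borel hierarchy and Wadge reducibility -/

/-- `A` is (boldface) `Σ⁰_α`: `Σ⁰₁` sets are the open sets, and for `α > 1` a `Σ⁰_α` set
is a countable union of sets each of which is `Π⁰_β` for some `1 ≤ β < α`. -/
def SigmaB (α : Ordinal.{0}) {X : Type} [TopologicalSpace X] (A : Set X) : Prop :=
  if α ≤ 1 then IsOpen A
  else ∃ f : ℕ → Set X, A = (⋃ i, f i) ∧
    ∀ i, ∃ β, 1 ≤ β ∧ ∃ _ : β < α, SigmaB β (f i)ᶜ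
termination_by α
decreasing_by assumption

/-- `A` is (boldface) `Π⁰_α`, i.e. the complement of `A` is `Σ⁰_α`. -/
def PiB (α : Ordinal.{0}) {X : Type} [TopologicalSpace X] (A : Set X) : Prop :=
  SigmaB α Aᶜ

/-- `A` is `Π⁰_α`-hard: every `Π⁰_α` subset of a zero-dimensional Polish space
continuously (Wadge) reduces to `A`. -/
def PiHard (α : Ordinal.{0}) {X : Type} [TopologicalSpace X] (A : Set X) : Prop :=
  ∀ (Y : Type) [TopologicalSpace Y] [PolishSpace Y] [TotallyDisconnectedSpace Y]
    (B : Set Y), PiB α B → ∃ g : Y → X, Continuous g ∧ ∀ y, y ∈ B ↔ g y ∈ A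

/-- `A` is `Π⁰_α`-complete. -/
def PiComplete (α : Ordinal.{0}) {X : Type} [TopologicalSpace X] (A : Set X) : Prop :=
  PiB α A ∧ PiHard α A

/-! ## Infinitary formulas of `L_{ω₁ω}` -/

/-- Formulas of `L_{ω₁ω}` (with countable conjunctions and disjunctions), with free
variables indexed by `ℕ`. -/
inductive LForm (L : FirstOrder.Language.{0,0}) : Type
  | rel (n : ℕ) (R : L.Relations n) (ts : Fin n → ℕ) : LForm L
  | equ (i j : ℕ) : LForm L
  | tru : LForm L
  | fls : LForm L
  | not (φ : LForm L) : LForm L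
  | conj (f : ℕ → LForm L) : LForm L
  | disj (f : ℕ → LForm L) : LForm L
  | all (k : ℕ) (φ : LForm L) : LForm L
  | ex (k : ℕ) (φ : LForm L) : LForm L

/-- Satisfaction of an `L_{ω₁ω}` formula in a structure `M` under a variable
assignment `v : ℕ → M`. -/
def Sat {L : FirstOrder.Language.{0,0}} (M : Type) [L.Structure M] : LForm L → (ℕ → M) → Prop
  | .rel _ R ts, v => Structure.RelMap R (fun i => v (ts i))
  | .equ i j, v => v i = v j
  | .tru, _ => True
  | .fls, _ => False
  | .not φ, v => ¬ Sat M φ v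
  | .conj f, v => ∀ i, Sat M (f i) v
  | .disj f, v => ∃ i, Sat M (f i) v
  | .all k φ, v => ∀ m : M, Sat M φ (Function.update v k m)
  | .ex k φ, v => ∃ m : M, Sat M φ (Function.update v k m)

/-- The free variables of an `L_{ω₁ω}` formula. -/
def fv {L : FirstOrder.Language.{0,0}} : LForm L → Set ℕ
  | .rel _ _ ts => Set.range ts
  | .equ i j => {i, j}
  | .tru => ∅
  | .fls => ∅
  | .not φ => fv φ
  | .conj f => ⋃ i, fv (f i)
  | .disj f => ⋃ i, fv (f i)
  | .all k φ => fv φ \ {k}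
  | .ex k φ => fv φ \ {k}

/-- Finitary quantifier-free `L_{ω₁ω}` formulas. -/
inductive IsQFinf {L : FirstOrder.Language.{0,0}} : LForm L → Prop
  | rel (n R ts) : IsQFinf (.rel n R ts)
  | equ (i j) : IsQFinf (.equ i j)
  | tru : IsQFinf .tru
  | fls : IsQFinf .fls
  | not {φ} : IsQFinf φ → IsQFinf (.not φ)
  | conj {f} : (Set.range f).Finite → (∀ i, IsQFinf (f i)) → IsQFinf (.conj f)
  | disj {f} : (Set.range f).Finite → (∀ i, IsQFinf (f i)) → IsQFinf (.disj f)

/-- `ExBlockOf φ ψ` : `φ` is `∃ x̄ ψ` for a (possibly empty) finite block of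
existential quantifiers. -/
inductive ExBlockOf {L : FirstOrder.Language.{0,0}} : LForm L → LForm L → Prop
  | refl (φ) : ExBlockOf φ φ
  | ex {φ ψ} (k) : ExBlockOf φ ψ → ExBlockOf (.ex k φ) ψ

/-- `AllBlockOf φ ψ` : `φ` is `∀ x̄ ψ` for a (possibly empty) finite block of
universal quantifiers. -/
inductive AllBlockOf {L : FirstOrder.Language.{0,0}} : LForm L → LForm L → Prop
  | refl (φ) : AllBlockOf φ φ
  | all {φ ψ} (k) : AllBlockOf φ ψ → AllBlockOf (.all k φ) ψ

/-- `IsSP α true φ` says `φ` is `Σ_α`; `IsSP α false φ` says `φ` is `Π_α`.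
`Σ₀ = Π₀` are the finitary quantifier-free formulas; for `α ≥ 1`, a `Σ_α` formula is a
countable disjunction of formulas `∃x̄ᵢ ψᵢ` with each `ψᵢ` in `Π_{βᵢ}` for some `βᵢ < α`,
and dually for `Π_α`. -/
def IsSP {L : FirstOrder.Language.{0,0}} (α : Ordinal.{0}) (isSigma : Bool) (φ : LForm L) : Prop :=
  if α = 0 then IsQFinf φ
  else if isSigma then
    ∃ f : ℕ → LForm L, φ = .disj f ∧
      ∀ i, ∃ ψ β, ∃ _ : β < α, ExBlockOf (f i) ψ ∧ IsSP β false ψ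
  else
    ∃ f : ℕ → LForm L, φ = .conj f ∧
      ∀ i, ∃ ψ β, ∃ _ : β < α, AllBlockOf (f i) ψ ∧ IsSP β true ψ
termination_by α
decreasing_by all_goals assumption

/-- `φ` is a `Σ_α` formula of `L_{ω₁ω}`. -/
def IsSigmaF {L : FirstOrder.Language.{0,0}} (α : Ordinal.{0}) (φ : LForm L) : Prop := IsSP α true φ

/-- `φ` is a `Π_α` formula of `L_{ω₁ω}`. -/
def IsPiF {L : FirstOrder.Language.{0,0}} (α : Ordinal.{0}) (φ : LForm L) : Prop := IsSP α false φ

/-! ## The back-and-forth classes `𝔈_α`, `𝔄_α`, `𝔈̄_α`, `𝔄̄_α` -/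

/-- Closure of a class of formulas under existential quantification and countable
disjunction. -/
inductive CloExDisj {L : FirstOrder.Language.{0,0}} (base : LForm L → Prop) : LForm L → Prop
  | base {φ} : base φ → CloExDisj base φ
  | ex {φ} (k) : CloExDisj base φ → CloExDisj base (.ex k φ)
  | disj {f} : (∀ i, CloExDisj base (f i)) → CloExDisj base (.disj f)

/-- Closure of a class of formulas under universal quantification and countable
conjunction. -/
inductive CloAllConj {L : FirstOrder.Language.{0,0}} (base : LForm L → Prop) : LForm L → Prop
  | base {φ} : base φ → CloAllConj base φ
  | all {φ} (k) : CloAllConj base φ → CloAllConj base (.all k φ)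
  | conj {f} : (∀ i, CloAllConj base (f i)) → CloAllConj base (.conj f)

/-- Closure of a class of formulas under countable conjunctions and disjunctions. -/
inductive CloConjDisj {L : FirstOrder.Language.{0,0}} (base : LForm L → Prop) : LForm L → Prop
  | base {φ} : base φ → CloConjDisj base φ
  | conj {f} : (∀ i, CloConjDisj base (f i)) → CloConjDisj base (.conj f)
  | disj {f} : (∀ i, CloConjDisj base (f i)) → CloConjDisj base (.disj f)

/-- `IsEA α true φ` says `φ ∈ 𝔈_α` and `IsEA α false φ` says `φ ∈ 𝔄_α`:
`𝔈₁ = Σ₁`, `𝔄₁ = Π₁`; for `α > 1`, `𝔈_α` is the closure of `⋃_{1 ≤ β < α} 𝔄̄_β` under `∃`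
and countable disjunction, where `𝔄̄_β` is the closure of `𝔄_β` under countable
conjunctions and disjunctions; dually for `𝔄_α`. -/
def IsEA {L : FirstOrder.Language.{0,0}} (α : Ordinal.{0}) (isE : Bool) (φ : LForm L) : Prop :=
  if α ≤ 1 then (if isE then IsSP 1 true φ else IsSP 1 false φ)
  else if isE then
    CloExDisj (fun ψ => ∃ β, 1 ≤ β ∧ ∃ _ : β < α,
      CloConjDisj (fun χ => IsEA β false χ) ψ) φ
  else
    CloAllConj (fun ψ => ∃ β, 1 ≤ β ∧ ∃ _ : β < α,
      CloConjDisj (fun χ => IsEA β true χ) ψ) φ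
termination_by α
decreasing_by all_goals assumption

/-- `φ ∈ 𝔈_α`. -/
def IsE {L : FirstOrder.Language.{0,0}} (α : Ordinal.{0}) (φ : LForm L) : Prop := IsEA α true φ

/-- `φ ∈ 𝔄_α`. -/
def IsA {L : FirstOrder.Language.{0,0}} (α : Ordinal.{0}) (φ : LForm L) : Prop := IsEA α false φ

/-- `φ ∈ 𝔈̄_α`, the closure of `𝔈_α` under countable conjunctions and disjunctions. -/
def IsEbar {L : FirstOrder.Language.{0,0}} (α : Ordinal.{0}) (φ : LForm L) : Prop :=
  CloConjDisj (IsE α) φ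

/-- `φ ∈ 𝔄̄_α`, the closure of `𝔄_α` under countable conjunctions and disjunctions. -/
def IsAbar {L : FirstOrder.Language.{0,0}} (α : Ordinal.{0}) (φ : LForm L) : Prop :=
  CloConjDisj (IsA α) φ

/-- `φ` is a `∀𝔈_α` formula: a countable conjunction of universally quantified `𝔈_α`
formulas. -/
def IsForallE {L : FirstOrder.Language.{0,0}} (α : Ordinal.{0}) (φ : LForm L) : Prop :=
  ∃ f : ℕ → LForm L, φ = .conj f ∧ ∀ i, ∃ ψ, AllBlockOf (f i) ψ ∧ IsE α ψ

/-- A sentence is a formula with no free variables. -/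
def IsSentence {L : FirstOrder.Language.{0,0}} (φ : LForm L) : Prop := fv φ = ∅

/-- Satisfaction of a formula (with free variables among `x_0, …, x_{n-1}`) by a tuple. -/
def SatTup {L : FirstOrder.Language.{0,0}} (M : Type) [L.Structure M] {n : ℕ}
    (c : Fin n → M) (φ : LForm L) : Prop :=
  ∀ v : ℕ → M, (∀ k : Fin n, v k = c k) → Sat M φ v

end


/-- The language with a single binary relation symbol. -/
def binLang : FirstOrder.Language.{0,0} :=
  ⟨fun _ => Empty, fun n => match n with | 2 => Unit | _ => Empty⟩

instance : binLang.IsRelational := fun _ => inferInstanceAs (IsEmpty Empty)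

instance (n : ℕ) : Countable (binLang.Relations n) := by
  match n with
  | 0 => exact inferInstanceAs (Countable Empty)
  | 1 => exact inferInstanceAs (Countable Empty)
  | 2 => exact inferInstanceAs (Countable Unit)
  | (k+3) => exact inferInstanceAs (Countable Empty)


/-- The vertices of the flower graph `G_𝒮`: for each `S ∈ 𝒮` and each `c : ℕ` (copy index),
a central vertex (`none`) together with, for each `n ∈ S`, the non-central vertices
`w_1, …, w_{n-1}` of an attached loop (cycle) of length `n` through the central vertex. -/
def FlowerV (S : Set (Set ℕ)) : Type :=
  Σ c : ↥S × ℕ, Option {p : ℕ × ℕ // p.1 ∈ (c.1 : Set ℕ) ∧ 0 < p.2 ∧ p.2 < p.1}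

/-- The edge relation of the flower graph `G_𝒮`. -/
def flowerAdj {S : Set (Set ℕ)} (v w : FlowerV S) : Prop :=
  v.1 = w.1 ∧
    match Option.map Subtype.val v.2, Option.map Subtype.val w.2 with
    | none, none => (1 : ℕ) ∈ (v.1.1 : Set ℕ)
    | none, some p => p.2 = 1 ∨ p.2 + 1 = p.1
    | some p, none => p.2 = 1 ∨ p.2 + 1 = p.1
    | some p, some q => p.1 = q.1 ∧ (p.2 + 1 = q.2 ∨ q.2 + 1 = p.2)

instance flowerStructure (S : Set (Set ℕ)) : binLang.Structure (FlowerV S) where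
  funMap := fun {_} f => isEmptyElim f
  RelMap := fun {n} => match n with
    | 0 => fun r _ => Empty.elim r
    | 1 => fun r _ => Empty.elim r
    | 2 => fun _ v => flowerAdj (v 0) (v 1)
    | (_+3) => fun r _ => Empty.elim r



end BFPaper

/-!
Let `ι : G_S ↪ G_T` be the inclusion. To show `G_T ≤₃ G_S`, answer a tuple `ā` of `G_S` by
`ι ā`. It then suffices that every tuple `ē` of `G_T` lies in the image of some embedding
`g : G_S ↪ G_T` agreeing with `ι` on `ā`: in the remaining two rounds the witnesses can be
read off `g`, and embeddings preserve quantifier-free formulas.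

Such a `g` is built component by component. A component of `G_T` met by `ē` whose flower type
`A` is not in `S` is matched with a fresh copy in `G_S` (copy index beyond all those in `ā`, `ē`)
of the flower `B ∪ (A ∩ F)`, where `B ∈ S`, `B ⊆ A`, and `F` is the finite set of petal lengths
met by `ē` together with `1`. Closure of `S` under finite additions puts this flower in `S`.
-/

theorem Fin.comp_append {α β : Type*} {n m : ℕ} (f : α → β) (a : Fin n → α) (b : Fin m → α) :
    f ∘ Fin.append a b = Fin.append (f ∘ a) (f ∘ b) := by
  funext i
  refine Fin.addCases (fun j => ?_) (fun j => ?_) i <;> simp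

theorem Ordinal.eq_zero_or_eq_one_of_lt_two {β : Ordinal} (h : β < 2) : β = 0 ∨ β = 1 :=
  (Order.lt_two_iff.mp h).lt_or_eq.imp_left Order.lt_one_iff.mp

namespace Function

variable {α β γ : Type*} {f : α → γ} {g : α → β} {e' : γ → β}

theorem Injective.extend_injective_of_disjoint (hf : Injective f) (hg : Injective g)
    (he' : Injective e') (hdisj : ∀ a c, e' c ≠ g a) : Injective (extend f g e') := by
  intro x y h
  by_cases hx : ∃ a, f a = x <;> by_cases hy : ∃ b, f b = y
  · obtain ⟨a, rfl⟩ := hx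
    obtain ⟨b, rfl⟩ := hy
    rw [hf.extend_apply, hf.extend_apply] at h
    rw [hg h]
  · obtain ⟨a, rfl⟩ := hx
    rw [hf.extend_apply, extend_apply' _ _ _ hy] at h
    exact absurd h.symm (hdisj a y)
  · obtain ⟨b, rfl⟩ := hy
    rw [hf.extend_apply, extend_apply' _ _ _ hx] at h
    exact absurd h (hdisj b x)
  · rw [extend_apply' _ _ _ hx, extend_apply' _ _ _ hy] at h
    exact he' h

theorem Injective.forall_extend {P : γ → β → Prop} (hf : Injective f)
    (hg : ∀ a, P (f a) (g a)) (he' : ∀ c, (¬∃ a, f a = c) → P c (e' c)) (c : γ) :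
    P c (extend f g e' c) := by
  by_cases hc : ∃ a, f a = c
  · obtain ⟨a, rfl⟩ := hc
    rw [hf.extend_apply]
    exact hg a
  · rw [extend_apply' _ _ _ hc]
    exact he' c hc

end Function

namespace BFPaper

section BackAndForth

variable {L : FirstOrder.Language.{0,0}} [L.IsRelational] [∀ n, Countable (L.Relations n)]
  {M N : Type} [L.Structure M] [L.Structure N] {n : ℕ}

theorem bfLeq_zero_iff (a : Fin n → M) (b : Fin n → N) :
    bfLeq L 0 M N a b ↔
      ∀ k < n, ((qfEnum L n k).Realize a ↔ (qfEnum L n k).Realize b) := by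
  rw [bfLeq]
  simp

theorem bfLeq_iff_of_ne_zero {α : Ordinal.{0}} (hα : α ≠ 0) (a : Fin n → M) (b : Fin n → N) :
    bfLeq L α M N a b ↔
      ∀ β < α, ∀ (m : ℕ) (d : Fin m → N), ∃ c : Fin m → M,
        bfLeq L β N M (Fin.append b d) (Fin.append a c) := by
  rw [bfLeq]
  simp [hα]

theorem isQF_qfEnum (n k : ℕ) : (qfEnum L n k).IsQF :=
  Subtype.prop _

theorem realize_qfEnum_embedding_comp (g : M ↪[L] N) (a : Fin n → M) (k : ℕ) :
    (qfEnum L n k).Realize (g ∘ a) ↔ (qfEnum L n k).Realize a := by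
  have h := (isQF_qfEnum n k).realize_embedding g (v := a) (xs := (Fin.elim0 : Fin 0 → M))
  rwa [Subsingleton.elim (g ∘ Fin.elim0) Fin.elim0] at h

theorem bfLeq_zero_embedding_comp_self (g : M ↪[L] N) (a : Fin n → M) :
    bfLeq L 0 N M (g ∘ a) a :=
  (bfLeq_zero_iff _ _).mpr fun k _ => realize_qfEnum_embedding_comp g a k

theorem bfLeq_zero_self_embedding_comp (g : M ↪[L] N) (a : Fin n → M) :
    bfLeq L 0 M N a (g ∘ a) :=
  (bfLeq_zero_iff _ _).mpr fun k _ => (realize_qfEnum_embedding_comp g a k).symm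

theorem bfLeq_one_embedding_comp_self (g : M ↪[L] N) (a : Fin n → M) :
    bfLeq L 1 N M (g ∘ a) a := by
  rw [bfLeq_iff_of_ne_zero one_ne_zero]
  intro β hβ m d
  obtain rfl := Order.lt_one_iff.mp hβ
  exact ⟨g ∘ d, Fin.comp_append g a d ▸ bfLeq_zero_self_embedding_comp g _⟩

theorem bfLeq_of_forall_exists_embedding {α : Ordinal.{0}} (hα : α ≤ 2) (a : Fin n → M)
    (b : Fin n → N) (h : ∀ (m : ℕ) (e : Fin m → N),
      ∃ (g : M ↪[L] N) (f : Fin m → M), g ∘ a = b ∧ g ∘ f = e) :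
    bfLeq L α M N a b := by
  rcases eq_or_ne α 0 with rfl | hα0
  · obtain ⟨g, -, rfl, -⟩ := h 0 Fin.elim0
    exact bfLeq_zero_self_embedding_comp g a
  rw [bfLeq_iff_of_ne_zero hα0]
  intro β hβ m e
  obtain ⟨g, f, rfl, rfl⟩ := h m e
  refine ⟨f, ?_⟩
  rw [← Fin.comp_append]
  rcases Ordinal.eq_zero_or_eq_one_of_lt_two (hβ.trans_le hα) with rfl | rfl
  · exact bfLeq_zero_embedding_comp_self g _
  · exact bfLeq_one_embedding_comp_self g _

theorem structLeq_three_of_forall_exists_embedding (ι : M ↪[L] N)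
    (h : ∀ (n : ℕ) (a : Fin n → M) (m : ℕ) (e : Fin m → N),
      ∃ (g : M ↪[L] N) (f : Fin m → M), g ∘ a = ι ∘ a ∧ g ∘ f = e) :
    structLeq L 3 N M := by
  rw [structLeq, bfLeq_iff_of_ne_zero three_ne_zero]
  intro β hβ m d
  refine ⟨ι ∘ d, ?_⟩
  have hβ2 : β ≤ 2 := Order.lt_add_one_iff.mp (by rwa [two_add_one_eq_three])
  rw [show (Fin.elim0 : Fin 0 → N) = ι ∘ Fin.elim0 from Subsingleton.elim _ _,
    ← Fin.comp_append]
  exact bfLeq_of_forall_exists_embedding hβ2 _ _ (h _ _)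

end BackAndForth

namespace FlowerV

variable {S : Set (Set ℕ)}

theorem ext {v w : FlowerV S} (h₁ : v.1 = w.1)
    (h₂ : v.2.map Subtype.val = w.2.map Subtype.val) : v = w := by
  obtain ⟨c, o⟩ := v
  obtain ⟨c', o'⟩ := w
  obtain rfl : c = c' := h₁
  exact congrArg (Sigma.mk c) (Option.map_injective Subtype.val_injective h₂)

end FlowerV

/-- A petal of length `1` is a self-loop at the centre, so `one_mem` is what makes the induced
vertex map reflect edges. -/
structure ComponentMap (S T : Set (Set ℕ)) where
  toFun : ↥S × ℕ → ↥T × ℕ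
  injective : Function.Injective toFun
  subset : ∀ x, (x.1 : Set ℕ) ⊆ (toFun x).1
  one_mem : ∀ x, 1 ∈ ((toFun x).1 : Set ℕ) → 1 ∈ (x.1 : Set ℕ)

namespace ComponentMap

variable {S T : Set (Set ℕ)} (g : ComponentMap S T)

def vertexMap (v : FlowerV S) : FlowerV T :=
  ⟨g.toFun v.1, v.2.map fun p => ⟨p.1, g.subset v.1 p.2.1, p.2.2⟩⟩

@[simp]
theorem vertexMap_fst (v : FlowerV S) : (g.vertexMap v).1 = g.toFun v.1 := rfl

@[simp]
theorem vertexMap_snd_map_val (v : FlowerV S) :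
    (g.vertexMap v).2.map Subtype.val = v.2.map Subtype.val := by
  obtain ⟨c, _ | _⟩ := v <;> rfl

theorem vertexMap_injective : Function.Injective g.vertexMap := fun v w h =>
  FlowerV.ext (g.injective (by simpa using congrArg Sigma.fst h))
    ((g.vertexMap_snd_map_val v).symm.trans <|
      (congrArg (fun u : FlowerV T => u.2.map Subtype.val) h).trans (g.vertexMap_snd_map_val w))

theorem flowerAdj_vertexMap_iff (v w : FlowerV S) :
    flowerAdj (g.vertexMap v) (g.vertexMap w) ↔ flowerAdj v w := by
  unfold flowerAdj
  rw [vertexMap_snd_map_val, vertexMap_snd_map_val, vertexMap_fst, vertexMap_fst,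
    g.injective.eq_iff]
  refine and_congr_right fun _ => ?_
  cases v.2.map Subtype.val <;> cases w.2.map Subtype.val
  · exact ⟨g.one_mem v.1, fun h => g.subset v.1 h⟩
  all_goals rfl

def embedding : FlowerV S ↪[binLang] FlowerV T where
  toFun := g.vertexMap
  inj' := g.vertexMap_injective
  map_fun' := fun f => isEmptyElim f
  map_rel' := fun {n} r x => by
    match n, r with
    | 2, _ => exact g.flowerAdj_vertexMap_iff (x 0) (x 1)

theorem vertexMap_congr {g' : ComponentMap S T} {v : FlowerV S}
    (h : g.toFun v.1 = g'.toFun v.1) :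
    g.vertexMap v = g'.vertexMap v :=
  FlowerV.ext h (by rw [vertexMap_snd_map_val, vertexMap_snd_map_val])

theorem exists_vertexMap_eq {x : ↥S × ℕ} {v : FlowerV T} (hx : g.toFun x = v.1)
    (hv : ∀ q ∈ v.2, q.1.1 ∈ (x.1 : Set ℕ)) : ∃ w, g.vertexMap w = v := by
  obtain ⟨c, o⟩ := v
  refine ⟨⟨x, o.pmap (fun q hq => ⟨q.1, hq, q.2.2⟩) hv⟩, FlowerV.ext hx ?_⟩
  exact (g.vertexMap_snd_map_val _).trans (by cases o <;> rfl)

def ofSubset {S T : Set (Set ℕ)} (hST : S ⊆ T) : ComponentMap S T where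
  toFun x := (⟨x.1, hST x.1.2⟩, x.2)
  injective x y h := by simpa [Prod.ext_iff, Subtype.ext_iff] using h
  subset _ := subset_rfl
  one_mem _ := id

end ComponentMap

section Extension

variable {S T : Set (Set ℕ)} {k : ℕ} (e : Fin k → FlowerV T)

/-- `1` is included so that a patched flower keeps the self-loop of the flower it replaces. -/
def petalLengths : Set ℕ :=
  insert 1 {n | ∃ i, ∃ q ∈ (e i).2, q.1.1 = n}

theorem petalLengths_finite : (petalLengths e).Finite := by
  refine ((Set.finite_range fun i => ((e i).2.map fun q => q.1.1).getD 0).insert 1).subset ?_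
  rintro _ (rfl | ⟨i, q, hq, rfl⟩)
  · exact Set.mem_insert 1 _
  · exact Set.mem_insert_of_mem 1 ⟨i, by simp [Option.mem_def.mp hq]⟩

variable (hdom : ∀ A ∈ T, ∃ B ∈ S, B ⊆ A)

noncomputable def patch (A : ↥T) : Set ℕ :=
  (hdom A A.2).choose ∪ (A ∩ petalLengths e)

theorem patch_mem (hSclosed : ∀ A ∈ S, ∀ F : Set ℕ, F.Finite → A ∪ F ∈ S) (A : ↥T) :
    patch e hdom A ∈ S :=
  hSclosed _ (hdom A A.2).choose_spec.1 _ ((petalLengths_finite e).inter_of_right _)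

theorem patch_subset (A : ↥T) : patch e hdom A ⊆ A :=
  Set.union_subset (hdom A A.2).choose_spec.2 Set.inter_subset_left

theorem mem_patch {A : ↥T} {n : ℕ} (hA : n ∈ (A : Set ℕ)) (he : n ∈ petalLengths e) :
    n ∈ patch e hdom A :=
  Or.inr ⟨hA, he⟩

variable (S) in
def FreshComponent : Type :=
  {p : ↥T × ℕ // (p.1 : Set ℕ) ∉ S ∧ ∃ i, (e i).1 = p}

variable (hSclosed : ∀ A ∈ S, ∀ F : Set ℕ, F.Finite → A ∪ F ∈ S) (N : ℕ)

/-- The copy index `N + i`, for some `i` with `(e i).1 = p`, keeps distinct fresh components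
apart, and apart from the copies below `N`. -/
noncomputable def freshCopy (p : FreshComponent S e) : ↥S × ℕ :=
  (⟨patch e hdom p.1.1, patch_mem e hdom hSclosed p.1.1⟩, N + p.2.2.choose)

theorem freshCopy_injective : Function.Injective (freshCopy e hdom hSclosed N) := by
  intro p q h
  have hi : p.2.2.choose = q.2.2.choose :=
    Fin.ext (by simpa [freshCopy] using congrArg Prod.snd h)
  exact Subtype.ext (p.2.2.choose_spec.symm.trans (hi ▸ q.2.2.choose_spec))

noncomputable def extensionMap (hST : S ⊆ T) : ComponentMap S T where
  toFun := Function.extend (freshCopy e hdom hSclosed N) Subtype.val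
    (ComponentMap.ofSubset hST).toFun
  injective := (freshCopy_injective e hdom hSclosed N).extend_injective_of_disjoint
    Subtype.val_injective (ComponentMap.ofSubset hST).injective
    fun p x h => p.2.1 (h ▸ x.1.2)
  subset := (freshCopy_injective e hdom hSclosed N).forall_extend
    (P := fun (x : ↥S × ℕ) (y : ↥T × ℕ) => (x.1 : Set ℕ) ⊆ y.1)
    (fun p => patch_subset e hdom p.1.1) fun _ _ => subset_rfl
  one_mem := (freshCopy_injective e hdom hSclosed N).forall_extend
    (P := fun (x : ↥S × ℕ) (y : ↥T × ℕ) => 1 ∈ (y.1 : Set ℕ) → 1 ∈ (x.1 : Set ℕ))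
    (fun _ h => mem_patch e hdom h (Set.mem_insert 1 _)) fun _ _ => id

variable (hST : S ⊆ T)

theorem extensionMap_freshCopy (p : FreshComponent S e) :
    (extensionMap e hdom hSclosed N hST).toFun (freshCopy e hdom hSclosed N p) = p.1 :=
  (freshCopy_injective e hdom hSclosed N).extend_apply _ _ p

theorem extensionMap_of_lt {x : ↥S × ℕ} (hx : x.2 < N) :
    (extensionMap e hdom hSclosed N hST).toFun x = (ComponentMap.ofSubset hST).toFun x := by
  refine Function.extend_apply' _ _ _ ?_
  rintro ⟨p, rfl⟩
  simp [freshCopy] at hx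

end Extension

theorem ComponentMap.exists_extension {S T : Set (Set ℕ)} (hST : S ⊆ T)
    (hSclosed : ∀ A ∈ S, ∀ F : Set ℕ, F.Finite → A ∪ F ∈ S)
    (hdom : ∀ A ∈ T, ∃ B ∈ S, B ⊆ A) {m k : ℕ} (d : Fin m → FlowerV S)
    (e : Fin k → FlowerV T) :
    ∃ (g : ComponentMap S T) (f : Fin k → FlowerV S),
      g.vertexMap ∘ d = (ofSubset hST).vertexMap ∘ d ∧ g.vertexMap ∘ f = e := by
  obtain ⟨N, hd, he⟩ : ∃ N, (∀ i, (d i).1.2 < N) ∧ ∀ i, (e i).1.2 < N := by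
    refine ⟨Finset.univ.sup (fun i => (d i).1.2) + Finset.univ.sup (fun i => (e i).1.2) + 1,
      fun i => ?_, fun i => ?_⟩
    · have := Finset.le_sup (f := fun i => (d i).1.2) (Finset.mem_univ i)
      omega
    · have := Finset.le_sup (f := fun i => (e i).1.2) (Finset.mem_univ i)
      omega
  set g := extensionMap e hdom hSclosed N hST
  have hcover : ∀ i, ∃ v, g.vertexMap v = e i := by
    intro i
    by_cases hS : ((e i).1.1 : Set ℕ) ∈ S
    · exact g.exists_vertexMap_eq (x := (⟨_, hS⟩, (e i).1.2))
        (extensionMap_of_lt e hdom hSclosed N hST (he i)) fun q _ => q.2.1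
    · exact g.exists_vertexMap_eq (extensionMap_freshCopy e hdom hSclosed N hST ⟨_, hS, i, rfl⟩)
        fun q hq => mem_patch e hdom q.2.1 (Set.mem_insert_of_mem 1 ⟨i, q, hq, rfl⟩)
  choose f hf using hcover
  refine ⟨g, f, funext fun i => ?_, funext hf⟩
  exact g.vertexMap_congr (extensionMap_of_lt e hdom hSclosed N hST (hd i))

theorem statement10_general (S T : Set (Set ℕ))
    (hSclosed : ∀ A ∈ S, ∀ F : Set ℕ, F.Finite → A ∪ F ∈ S)
    (hST : S ⊆ T) (hdom : ∀ A ∈ T, ∃ B ∈ S, B ⊆ A) :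
    structLeq binLang 3 (FlowerV T) (FlowerV S) := by
  refine structLeq_three_of_forall_exists_embedding (ComponentMap.ofSubset hST).embedding
    fun _ a _ e => ?_
  obtain ⟨g, f, hga, hgf⟩ := ComponentMap.exists_extension hST hSclosed hdom a e
  exact ⟨g.embedding, f, hga, hgf⟩

/-- For nonempty families `𝒮 ⊆ 𝒯` of subsets of `ω` closed under finite
additions of elements, if every `T ∈ 𝒯` contains some `S ∈ 𝒮` then `G_𝒮 ≥₃ G_𝒯`. -/
theorem statement10 (S T : Set (Set ℕ)) (hS : S.Nonempty) (hT : T.Nonempty)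
    (hSclosed : ∀ A ∈ S, ∀ F : Set ℕ, F.Finite → A ∪ F ∈ S)
    (hTclosed : ∀ A ∈ T, ∀ F : Set ℕ, F.Finite → A ∪ F ∈ T)
    (hST : S ⊆ T) (hdom : ∀ A ∈ T, ∃ B ∈ S, B ⊆ A) :
    structLeq binLang 3 (FlowerV T) (FlowerV S) :=
  statement10_general S T hSclosed hST hdom

end BFPaper
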